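/- Let I be a countable set (|I| ≤ ℵ₀), let τ : ℝ^I → ℝ and let p ∈ [1, ∞). Then τ preserves p-integrability over every finite measure space if, and only if, τ preserves p-integrability over ([0,1], B_[0,1], Leb), where B_[0,1] is the Borel σ-algebra on [0,1] and Leb is the Lebesgue measure on [0,1]. -/

import Mathlib

open MeasureTheory

universe u v

/-- `f ∈ L^p(μ)`: `f` is measurable and `∫ |f|^p dμ < ∞`. -/
def MemLpReal {Ω : Type u} [MeasurableSpace Ω] (μ : Measure Ω) (p : ℝ) (f : Ω → ℝ) : Prop :=
  Measurable f ∧ ∫⁻ x, ENNReal.ofReal (|f x| ^ p) ∂μ < ⊤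

/-- `τ` preserves `p`-integrability over the measure space `(Ω, μ)`. -/
def PreservesLpOver {I : Type v} (τ : (I → ℝ) → ℝ) (p : ℝ)
    (Ω : Type u) [MeasurableSpace Ω] (μ : Measure Ω) : Prop :=
  ∀ f : I → Ω → ℝ, (∀ i, MemLpReal μ p (f i)) →
    MemLpReal μ p fun x => τ fun i => f i x

/-! A `τ` preserving `p`-integrability over `[0, 1]` is Borel measurable: `ℝ^I` embeds measurably
into the Cantor set, a Lebesgue-null subset of `[0, 1]`, and the coordinates of a measurable left
inverse of this embedding vanish almost everywhere, so they lie in `L^p` and `τ` composed with the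
left inverse is measurable. For measurable `τ`, whether `τ ∘ f ∈ L^p(μ)` depends only on the law
of `f = (f_i)_i`, a finite measure on the standard Borel space `ℝ^I`; after normalisation this law
is the image of Lebesgue measure on `[0, 1]` under a measurable map. -/

open Set Filter
open scoped ENNReal Pointwise Topology

section MemLpReal

variable {Ω Ω' E : Type*} [MeasurableSpace Ω] [MeasurableSpace Ω'] [MeasurableSpace E]
  {μ : Measure Ω} {p : ℝ} {f : Ω → ℝ}

theorem memLpReal_zero_measure (hf : Measurable f) : MemLpReal (0 : Measure Ω) p f :=
  ⟨hf, by simp⟩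

theorem memLpReal_of_ae_eq_zero (hp : p ≠ 0) (hf : Measurable f) (h : f =ᵐ[μ] 0) :
    MemLpReal μ p f := by
  have h' : (fun x ↦ ENNReal.ofReal (|f x| ^ p)) =ᵐ[μ] 0 :=
    h.mono fun x hx ↦ by simp [hx, Real.zero_rpow hp]
  exact ⟨hf, by simp [lintegral_congr_ae h']⟩

theorem memLpReal_smul_measure_iff {c : ℝ≥0∞} (h0 : c ≠ 0) (hc : c ≠ ∞) :
    MemLpReal (c • μ) p f ↔ MemLpReal μ p f := by
  simp only [MemLpReal, lintegral_smul_measure, smul_eq_mul, lt_top_iff_ne_top,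
    ENNReal.mul_eq_top, h0, hc, false_and, or_false, ne_eq, not_false_eq_true, true_and]

theorem memLpReal_map_iff {F : Ω → E} (hF : Measurable F) {g : E → ℝ} (hg : Measurable g) :
    MemLpReal (μ.map F) p g ↔ MemLpReal μ p (g ∘ F) := by
  rw [MemLpReal, MemLpReal,
    lintegral_map (f := fun y ↦ ENNReal.ofReal (|g y| ^ p)) (by fun_prop) hF]
  simp only [hg, hg.comp hF, true_and, Function.comp_apply]

theorem memLpReal_map_measurableEquiv_iff (e : Ω ≃ᵐ Ω') {g : Ω' → ℝ} :
    MemLpReal (μ.map e) p g ↔ MemLpReal μ p (g ∘ e) := by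
  simp only [MemLpReal, e.measurable_comp_iff, lintegral_map_equiv, Function.comp_apply]

end MemLpReal

theorem volume_preCantorSet_le (n : ℕ) :
    volume (preCantorSet n) ≤ ENNReal.ofReal ((2 / 3) ^ n) := by
  induction n with
  | zero => simp
  | succ n ih =>
    set P := preCantorSet n
    have hleft : volume ((· / 3) '' P) = ENNReal.ofReal (1 / 3) * volume P := by
      have hP : (· / 3) '' P = (3⁻¹ : ℝ) • P := by
        simp only [← image_smul, smul_eq_mul, div_eq_inv_mul]
      rw [hP, Measure.addHaar_smul]
      norm_num
    have hright : volume ((fun x ↦ (2 + x) / 3) '' P) = volume ((· / 3) '' P) := by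
      have hP : (fun x : ℝ ↦ (2 + x) / 3) '' P = (2 / 3 : ℝ) +ᵥ ((· / 3) '' P) := by
        rw [← image_vadd, image_image]
        congr 1 with x
        rw [vadd_eq_add]
        ring
      rw [hP, measure_vadd]
    calc volume (preCantorSet (n + 1))
        ≤ volume ((· / 3) '' P) + volume ((fun x ↦ (2 + x) / 3) '' P) :=
          measure_union_le _ _
      _ = ENNReal.ofReal (2 / 3) * volume P := by
          rw [hright, hleft, ← two_mul, ← mul_assoc, ← ENNReal.ofReal_ofNat 2,
            ← ENNReal.ofReal_mul zero_le_two]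
          norm_num
      _ ≤ ENNReal.ofReal (2 / 3) * ENNReal.ofReal ((2 / 3) ^ n) := by gcongr
      _ = ENNReal.ofReal ((2 / 3) ^ (n + 1)) := by
          rw [← ENNReal.ofReal_mul (by norm_num), pow_succ, mul_comm]

theorem volume_cantorSet : volume cantorSet = 0 := by
  have h : Tendsto (fun n : ℕ ↦ ENNReal.ofReal ((2 / 3 : ℝ) ^ n)) atTop (𝓝 0) := by
    simpa using ENNReal.tendsto_ofReal
      (tendsto_pow_atTop_nhds_zero_of_lt_one (r := (2 / 3 : ℝ)) (by norm_num) (by norm_num))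
  exact nonpos_iff_eq_zero.1 <| ge_of_tendsto' h fun n ↦
    (measure_mono (iInter_subset _ n)).trans (volume_preCantorSet_le n)

theorem exists_measurableEmbedding_real_range_subset_cantorSet (α : Type*) [MeasurableSpace α]
    [StandardBorelSpace α] : ∃ s : α → ℝ, MeasurableEmbedding s ∧ range s ⊆ cantorSet := by
  let e : ℝ ≃ᵐ cantorSet := (PolishSpace.measurableEquivNatBoolOfNotCountable not_countable).trans
    cantorSetHomeomorphNatToBool.symm.toMeasurableEquiv
  refine ⟨(↑) ∘ e ∘ embeddingReal α, ?_, ?_⟩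
  · exact (MeasurableEmbedding.subtype_coe isClosed_cantorSet.measurableSet).comp
      (e.measurableEmbedding.comp (measurableEmbedding_embeddingReal α))
  · rintro _ ⟨x, rfl⟩
    exact (e (embeddingReal α x)).2

theorem exists_measurableEmbedding_unitInterval_volume_range_eq_zero (α : Type*)
    [MeasurableSpace α] [StandardBorelSpace α] :
    ∃ s : α → unitInterval, MeasurableEmbedding s ∧ volume (range s) = 0 := by
  obtain ⟨s, hs, hsC⟩ := exists_measurableEmbedding_real_range_subset_cantorSet α
  have hsI : ∀ x, s x ∈ unitInterval := fun x ↦ cantorSet_subset_unitInterval (hsC ⟨x, rfl⟩)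
  have hs' : MeasurableEmbedding (codRestrict s _ hsI) :=
    { injective := hs.injective.codRestrict hsI
      measurable := hs.measurable.codRestrict hsI
      measurableSet_image' := fun A hA ↦ by
        rw [← Subtype.val_injective.preimage_image (codRestrict s _ hsI '' A), image_image]
        exact measurable_subtype_coe (hs.measurableSet_image' hA) }
  refine ⟨codRestrict s _ hsI, hs', ?_⟩
  rw [unitInterval.volume_apply, ← range_comp]
  exact measure_mono_null hsC volume_cantorSet

section PreservesLpOver

variable {I Ω Ω' : Type*} [MeasurableSpace Ω] [MeasurableSpace Ω'] {μ : Measure Ω}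
  {τ : (I → ℝ) → ℝ} {p : ℝ}

theorem PreservesLpOver.map_measurableEquiv (h : PreservesLpOver τ p Ω μ) (e : Ω ≃ᵐ Ω') :
    PreservesLpOver τ p Ω' (μ.map e) := fun f hf ↦
  (memLpReal_map_measurableEquiv_iff e).2 <|
    h (fun i ↦ f i ∘ e) fun i ↦ (memLpReal_map_measurableEquiv_iff e).1 (hf i)

theorem PreservesLpOver.measurable (h : PreservesLpOver τ p Ω μ) (hp : p ≠ 0)
    {s : (I → ℝ) → Ω} (hs : MeasurableEmbedding s) (hnull : μ (range s) = 0) : Measurable τ := by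
  classical
  let φ : Ω → I → ℝ := Function.extend s id 0
  have hφ : Measurable φ := hs.measurable_extend measurable_id measurable_const
  have hφ0 : φ =ᵐ[μ] 0 :=
    measure_mono_null (fun x hx ↦ by_contra fun hxs ↦ hx (Function.extend_apply' _ _ _ hxs)) hnull
  have hτφ : Measurable fun x ↦ τ (φ x) :=
    (h (fun i x ↦ φ x i) fun i ↦ memLpReal_of_ae_eq_zero hp ((measurable_pi_apply i).comp hφ)
      (hφ0.mono fun x hx ↦ congrFun hx i)).1
  have hτ : τ = (fun x ↦ τ (φ x)) ∘ s := funext fun y ↦ by simp [φ, hs.injective.extend_apply]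
  exact hτ ▸ hτφ.comp hs.measurable

theorem PreservesLpOver.memLpReal_of_isFiniteMeasure [Countable I]
    (h : PreservesLpOver τ p unitInterval volume) (hτ : Measurable τ) (ν : Measure (I → ℝ))
    [IsFiniteMeasure ν] (hν : ∀ i, MemLpReal ν p fun x ↦ x i) : MemLpReal ν p τ := by
  rcases eq_zero_or_neZero ν with rfl | _
  · exact memLpReal_zero_measure hτ
  have h0 : (ν univ)⁻¹ ≠ 0 := ENNReal.inv_ne_zero.2 (measure_ne_top ν univ)
  have htop : (ν univ)⁻¹ ≠ ∞ :=
    ENNReal.inv_ne_top.2 (Measure.measure_univ_ne_zero.2 (NeZero.ne ν))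
  obtain ⟨G, hG, hGν⟩ := ((ν univ)⁻¹ • ν).exists_measurable_map_eq
  rw [← memLpReal_smul_measure_iff h0 htop, ← hGν, memLpReal_map_iff hG hτ]
  refine h (fun i u ↦ G u i) fun i ↦ ?_
  have hνi := hν i
  rwa [← memLpReal_smul_measure_iff h0 htop, ← hGν, memLpReal_map_iff hG (measurable_pi_apply i)]
    at hνi

end PreservesLpOver

theorem preserves_p_integrability_finite_iff_over_unitInterval {I : Type v} [Countable I]
    (τ : (I → ℝ) → ℝ) (p : ℝ) (hp : 1 ≤ p) :
    (∀ (Ω : Type u) [MeasurableSpace Ω] (μ : Measure Ω) [IsFiniteMeasure μ],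
        PreservesLpOver τ p Ω μ) ↔
      PreservesLpOver τ p (Set.Icc (0 : ℝ) 1) volume := by
  constructor
  · intro H
    have h := (H _ (volume.map MeasurableEquiv.ulift.symm)).map_measurableEquiv
      (MeasurableEquiv.ulift (α := Set.Icc (0 : ℝ) 1))
    rwa [MeasurableEquiv.map_map_symm] at h
  · intro h Ω _ μ _ f hf
    obtain ⟨s, hs, hnull⟩ := exists_measurableEmbedding_unitInterval_volume_range_eq_zero (I → ℝ)
    have hτ := h.measurable (zero_lt_one.trans_le hp).ne' hs hnull
    have hF : Measurable fun x i ↦ f i x := measurable_pi_lambda _ fun i ↦ (hf i).1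
    refine (memLpReal_map_iff hF hτ).1 (h.memLpReal_of_isFiniteMeasure hτ _ fun i ↦ ?_)
    exact (memLpReal_map_iff hF (measurable_pi_apply i)).2 (hf i)
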